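/- For each integer $k \ge 2$, there exists a non-planar finite simple connected graph $G$ with $\dim_k(G) = 2$. -/

import Mathlib

open SimpleGraph

/-- The distance-`k` truncated distance `dₖ(x,y) = min{d(x,y), k+1}`, valued in `ℕ∞`
(so unreachable pairs have distance `⊤`, which is truncated to `k+1`). -/
noncomputable def distK {V : Type*} (G : SimpleGraph V) (k : ℕ) (x y : V) : ℕ∞ :=
  min (G.edist x y) (k + 1)

/-- `S` is a distance-`k` resolving set of `G`. -/
def IsDistKResolving {V : Type*} (G : SimpleGraph V) (k : ℕ) (S : Set V) : Prop :=
  ∀ x y : V, x ≠ y → ∃ z ∈ S, distK G k x z ≠ distK G k y z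

/-- The distance-`k` dimension of a finite graph `G`: the minimum cardinality of a
distance-`k` resolving set of `G`. -/
noncomputable def dimK {V : Type*} [Fintype V] (G : SimpleGraph V) (k : ℕ) : ℕ :=
  sInf { m | ∃ S : Finset V, IsDistKResolving G k ↑S ∧ S.card = m }

/-- `H` is a minor of `G`: there is an assignment of disjoint, nonempty, connected
branch sets in `G` to the vertices of `H` such that edges of `H` are realized by
edges of `G` between the corresponding branch sets. -/
def IsMinor {V W : Type*} (G : SimpleGraph V) (H : SimpleGraph W) : Prop :=
  ∃ f : W → Set V,
    (∀ w, (f w).Nonempty) ∧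
    (∀ w, (G.induce (f w)).Connected) ∧
    (∀ w w', w ≠ w' → Disjoint (f w) (f w')) ∧
    (∀ w w', H.Adj w w' → ∃ a ∈ f w, ∃ b ∈ f w', G.Adj a b)

/-- By Wagner's theorem, a graph is non-planar iff it has `K₅` or `K₃,₃` as a minor. -/
def NonPlanar {V : Type*} (G : SimpleGraph V) : Prop :=
  IsMinor G (⊤ : SimpleGraph (Fin 5)) ∨ IsMinor G (completeBipartiteGraph (Fin 3) (Fin 3))

/-!
Subdivide the edges `03`, `04`, `14`, `23` of `K₃,₃`. The resulting graph still has `K₃,₃` as a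
minor, and its diameter is `3`, so for `k ≥ 2` truncation does not change any distance. The
distances to the two vertices `0` and `3` separate all ten vertices, while those to a single vertex
cannot, as they take at most four values. The distances are certified by a table satisfying the
Bellman equations of shortest paths.
-/

namespace SimpleGraph

variable {V : Type*} {G : SimpleGraph V}

section Bellman

variable {y : V} {g : V → ℕ}

lemma le_length_of_forall_adj_le (hy : g y = 0) (hg : ∀ x z, G.Adj x z → g x ≤ g z + 1)
    {x : V} (q : G.Walk x y) : g x ≤ q.length := by
  induction q with
  | nil => simp [hy]
  | cons h q ih =>
    rw [Walk.length_cons]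
    exact (hg _ _ h).trans (Nat.add_le_add_right (ih hy) 1)

lemma coe_le_edist_of_forall_adj_le (hy : g y = 0) (hg : ∀ x z, G.Adj x z → g x ≤ g z + 1)
    (x : V) : (g x : ℕ∞) ≤ G.edist x y := by
  rw [edist_eq_sInf]
  refine le_sInf ?_
  rintro _ ⟨q, rfl⟩
  exact Nat.cast_le.mpr (le_length_of_forall_adj_le hy hg q)

lemma edist_le_of_forall_exists_adj
    (hg : ∀ x, x ≠ y → ∃ z, G.Adj x z ∧ g x = g z + 1) (x : V) : G.edist x y ≤ g x := by
  induction hx : g x using Nat.strong_induction_on generalizing x with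
  | _ n ih =>
    rcases eq_or_ne x y with rfl | hne
    · simp
    obtain ⟨z, hxz, hz⟩ := hg x hne
    calc G.edist x y ≤ G.edist x z + G.edist z y := G.edist_triangle
      _ ≤ 1 + (g z : ℕ∞) := add_le_add (edist_eq_one_iff_adj.mpr hxz).le (ih _ (by omega) z rfl)
      _ = n := by norm_cast; omega

theorem edist_eq_of_bellman (hy : g y = 0) (hle : ∀ x z, G.Adj x z → g x ≤ g z + 1)
    (hdesc : ∀ x, x ≠ y → ∃ z, G.Adj x z ∧ g x = g z + 1) (x : V) : G.edist x y = g x :=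
  le_antisymm (edist_le_of_forall_exists_adj hdesc x) (coe_le_edist_of_forall_adj_le hy hle x)

end Bellman

lemma induce_connected_of_forall_adj {s : Set V} {a : V} (ha : a ∈ s)
    (h : ∀ b ∈ s, b ≠ a → G.Adj a b) : (G.induce s).Connected := by
  have reach : ∀ w : s, (G.induce s).Reachable ⟨a, ha⟩ w := by
    rintro ⟨b, hb⟩
    rcases eq_or_ne b a with rfl | hba
    · rfl
    · exact Adj.reachable (G := G.induce s) (h b hb hba)
  exact (connected_iff _).mpr ⟨fun u v => (reach u).symm.trans (reach v), ⟨⟨a, ha⟩⟩⟩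

end SimpleGraph

section DistKDimension

variable {V : Type*} {G : SimpleGraph V} {k : ℕ} {x y : V}

lemma distK_eq_edist (h : G.edist x y ≤ k + 1) : distK G k x y = G.edist x y :=
  min_eq_left h

lemma isDistKResolving_univ : IsDistKResolving G k Set.univ := by
  intro x y hxy
  refine ⟨x, trivial, ?_⟩
  have hyx : 0 < distK G k y x := lt_min (G.edist_pos_of_ne hxy.symm) (by positivity)
  simpa [distK] using hyx.ne

variable [Fintype V]

lemma dimK_le_card {S : Finset V} (hS : IsDistKResolving G k S) : dimK G k ≤ S.card :=
  Nat.sInf_le ⟨S, hS, rfl⟩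

lemma two_le_dimK [Nontrivial V] (h : ∀ z, ∃ x y, x ≠ y ∧ distK G k x z = distK G k y z) :
    2 ≤ dimK G k := by
  refine le_csInf ⟨_, Finset.univ, by simpa using isDistKResolving_univ, rfl⟩ ?_
  rintro _ ⟨S, hS, rfl⟩
  by_contra! hS1
  obtain ⟨a, b, hab⟩ := exists_pair_ne V
  rcases S.eq_empty_or_nonempty with rfl | ⟨z, hz⟩
  · simpa using hS a b hab
  obtain ⟨x, y, hxy, hxyz⟩ := h z
  obtain ⟨w, hw, hne⟩ := hS x y hxy
  rw [Finset.card_le_one.mp (by omega) w hw z hz] at hne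
  exact hne hxyz

end DistKDimension

/-- `K₃,₃` on the sides `{0,1,2}`, `{3,4,5}` with the edges `03`, `04`, `14`, `23` subdivided by
`6`, `7`, `8`, `9` respectively. -/
def k33Subdivision : SimpleGraph (Fin 10) :=
  SimpleGraph.fromRel fun x y => (x, y) ∈
    [(0, 5), (1, 5), (2, 5), (1, 3), (2, 4), (0, 6), (6, 3), (0, 7), (7, 4), (1, 8), (8, 4),
      (2, 9), (9, 3)]

instance : DecidableRel k33Subdivision.Adj := fun x y =>
  inferInstanceAs (Decidable (x ≠ y ∧ (_ ∨ _)))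

def k33SubdivisionDist : Fin 10 → Fin 10 → ℕ :=
  ![![0, 2, 2, 2, 2, 1, 1, 1, 3, 3],
    ![2, 0, 2, 1, 2, 1, 2, 3, 1, 2],
    ![2, 2, 0, 2, 1, 1, 3, 2, 2, 1],
    ![2, 1, 2, 0, 3, 2, 1, 3, 2, 1],
    ![2, 2, 1, 3, 0, 2, 3, 1, 1, 2],
    ![1, 1, 1, 2, 2, 0, 2, 2, 2, 2],
    ![1, 2, 3, 1, 3, 2, 0, 2, 3, 2],
    ![1, 3, 2, 3, 1, 2, 2, 0, 2, 3],
    ![3, 1, 2, 2, 1, 2, 3, 2, 0, 3],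
    ![3, 2, 1, 1, 2, 2, 2, 3, 3, 0]]

namespace k33Subdivision

lemma edist_eq (x y : Fin 10) : k33Subdivision.edist x y = k33SubdivisionDist x y := by
  refine k33Subdivision.edist_eq_of_bellman (g := (k33SubdivisionDist · y)) ?_ ?_ ?_ x
  all_goals revert y; decide

lemma connected : k33Subdivision.Connected :=
  (connected_iff _).mpr ⟨fun x y => reachable_of_edist_ne_top (by simp [edist_eq]), ⟨0⟩⟩

lemma distK_eq {k : ℕ} (hk : 2 ≤ k) (x y : Fin 10) :
    distK k33Subdivision k x y = k33SubdivisionDist x y := by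
  have hdiam : k33SubdivisionDist x y ≤ 3 := by revert x y; decide
  rw [distK_eq_edist (by rw [edist_eq]; exact_mod_cast (by omega : _ ≤ k + 1)), edist_eq]

def branchSet : Fin 3 ⊕ Fin 3 → Finset (Fin 10) :=
  Sum.elim ![{0, 6, 7}, {1, 8}, {2, 9}] ![{3}, {4}, {5}]

def branchCenter : Fin 3 ⊕ Fin 3 → Fin 10 := Sum.elim ![0, 1, 2] ![3, 4, 5]

lemma isMinor_k33 : IsMinor k33Subdivision (completeBipartiteGraph (Fin 3) (Fin 3)) := by
  refine ⟨fun w => branchSet w, fun w => ?_, fun w => ?_, fun w w' hne => ?_, ?_⟩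
  · rw [Finset.coe_nonempty]
    revert w; decide
  · refine induce_connected_of_forall_adj (a := branchCenter w) ?_ ?_
    · revert w; decide
    · revert w; decide
  · rw [Finset.disjoint_coe]
    revert w w'; decide
  · have hcross : ∀ i j, ∃ a ∈ branchSet (.inl i), ∃ b ∈ branchSet (.inr j),
        k33Subdivision.Adj a b := by decide
    rintro (i | i) (j | j) hij
    · simp at hij
    · exact hcross i j
    · obtain ⟨a, ha, b, hb, hab⟩ := hcross j i
      exact ⟨b, hb, a, ha, hab.symm⟩
    · simp at hij

lemma dimK_eq_two {k : ℕ} (hk : 2 ≤ k) : dimK k33Subdivision k = 2 := by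
  refine le_antisymm ((dimK_le_card (S := {0, 3}) ?_).trans (by decide)) (two_le_dimK ?_)
  · intro x y hxy
    simp only [Finset.coe_insert, Finset.coe_singleton, Set.mem_insert_iff,
      Set.mem_singleton_iff, exists_eq_or_imp, exists_eq_left, distK_eq hk, ne_eq, Nat.cast_inj]
    revert x y; decide
  · intro z
    simp only [distK_eq hk, Nat.cast_inj]
    revert z; decide

end k33Subdivision

/-- For each integer `k ≥ 2`, there exists a non-planar connected graph `G`
with `dimₖ(G) = 2`. -/
theorem stmt7 (k : ℕ) (hk : 2 ≤ k) :
    ∃ (n : ℕ) (G : SimpleGraph (Fin n)), G.Connected ∧ NonPlanar G ∧ dimK G k = 2 :=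
  ⟨10, k33Subdivision, k33Subdivision.connected, .inr k33Subdivision.isMinor_k33,
    k33Subdivision.dimK_eq_two hk⟩
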